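/- For the H-twisted bracket ⟦X+α, Y+β⟧_H = [X,Y] + L_X β − ι_Y dα + ι_Y ι_X H on TM ⊕ T*M, the Jacobi identity holds if and only if the correction term vanishes for all triples, which occurs exactly when dH = 0; in particular, if H is a closed 3-form then ⟦·,·⟧_H satisfies the Jacobi identity. -/
import Mathlib


section

/- Abstract Cartan calculus: `V` the Lie algebra of vector fields, `Ω n` the `n`-forms,
`d` the exterior derivative, `iota X` interior product, `lie X` the Lie derivative. -/
variable {V : Type*} [LieRing V] [LieAlgebra ℝ V]
  {Ω : ℕ → Type*} [∀ n, AddCommGroup (Ω n)] [∀ n, Module ℝ (Ω n)]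

/-- The `H`-twisted Dorfman bracket on sections of `TM ⊕ T*M`:
`⟦X+α, Y+β⟧_H = ([X,Y], L_X β − ι_Y dα + ι_Y ι_X H)`. -/
def twistedDorfman
    (d : ∀ n, Ω n →ₗ[ℝ] Ω (n + 1))
    (iota : V → ∀ n, Ω (n + 1) →ₗ[ℝ] Ω n)
    (lie : V → ∀ n, Ω n →ₗ[ℝ] Ω n)
    (H : Ω 3) (e₁ e₂ : V × Ω 1) : V × Ω 1 :=
  (⁅e₁.1, e₂.1⁆,
    lie e₁.1 1 e₂.2 - iota e₂.1 1 (d 1 e₁.2) + iota e₂.1 1 (iota e₁.1 2 H))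

/-- For the `H`-twisted Dorfman bracket `⟦X+α, Y+β⟧_H = [X,Y] + L_X β − ι_Y dα + ι_Y ι_X H`
on `TM ⊕ T*M`, the Jacobiator equals the correction term `ι_Z ι_Y ι_X dH`; hence the
Jacobi identity holds whenever `dH = 0`, i.e. when `H` is a closed `3`-form.  The
hypotheses are the standard Cartan calculus identities. -/
theorem twisted_courant_jacobiator
    (d : ∀ n, Ω n →ₗ[ℝ] Ω (n + 1))
    (iota : V → ∀ n, Ω (n + 1) →ₗ[ℝ] Ω n)
    (lie : V → ∀ n, Ω n →ₗ[ℝ] Ω n)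
    (hCartan0 : ∀ (X : V) (f : Ω 0), lie X 0 f = iota X 0 (d 0 f))
    (hCartan : ∀ (X : V) (n) (ω : Ω (n + 1)),
      lie X (n + 1) ω = iota X (n + 1) (d (n + 1) ω) + d n (iota X n ω))
    (hLieBracket : ∀ (X Y : V) (n) (ω : Ω n),
      lie ⁅X, Y⁆ n ω = lie X n (lie Y n ω) - lie Y n (lie X n ω))
    (hIotaBracket : ∀ (X Y : V) (n) (ω : Ω (n + 1)),
      iota ⁅X, Y⁆ n ω = lie X n (iota Y n ω) - iota Y n (lie X (n + 1) ω))
    (hIotaIota : ∀ (X Y : V) (n) (ω : Ω (n + 2)),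
      iota X n (iota Y (n + 1) ω) = - iota Y n (iota X (n + 1) ω))
    (hd2 : ∀ (n) (ω : Ω n), d (n + 1) (d n ω) = 0)
    (H : Ω 3) :
    (∀ e₁ e₂ e₃ : V × Ω 1,
      twistedDorfman d iota lie H e₁ (twistedDorfman d iota lie H e₂ e₃)
        - twistedDorfman d iota lie H (twistedDorfman d iota lie H e₁ e₂) e₃
        - twistedDorfman d iota lie H e₂ (twistedDorfman d iota lie H e₁ e₃)
      = (0, iota e₃.1 1 (iota e₂.1 2 (iota e₁.1 3 (d 3 H)))))
    ∧ (d 3 H = 0 →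
        ∀ e₁ e₂ e₃ : V × Ω 1,
          twistedDorfman d iota lie H e₁ (twistedDorfman d iota lie H e₂ e₃)
            = twistedDorfman d iota lie H (twistedDorfman d iota lie H e₁ e₂) e₃
              + twistedDorfman d iota lie H e₂ (twistedDorfman d iota lie H e₁ e₃)) := by

  have main : ∀ e₁ e₂ e₃ : V × Ω 1,
      twistedDorfman d iota lie H e₁ (twistedDorfman d iota lie H e₂ e₃)
        - twistedDorfman d iota lie H (twistedDorfman d iota lie H e₁ e₂) e₃
        - twistedDorfman d iota lie H e₂ (twistedDorfman d iota lie H e₁ e₃)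
      = (0, iota e₃.1 1 (iota e₂.1 2 (iota e₁.1 3 (d 3 H)))) := by
    rintro ⟨X, α⟩ ⟨Y, β⟩ ⟨Z, γ⟩
    simp only [twistedDorfman, Prod.mk_sub_mk, Prod.mk.injEq]
    constructor
    · rw [leibniz_lie]; abel
    · simp only [hIotaBracket, hLieBracket, map_add, map_sub, hCartan, hd2, map_zero]
      abel
  refine ⟨main, fun hdH e₁ e₂ e₃ => ?_⟩
  have h := main e₁ e₂ e₃
  rw [hdH] at h
  simp only [map_zero, Prod.mk_zero_zero] at h
  rw [sub_sub, sub_eq_zero] at h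
  exact h

end
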